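/- arXiv:2207.07957 — 9 statements merged into one kernel-verified Lean document; each statement's English description precedes it below -/
import Mathlib

section
/- Let f : ℕ → ℝ be an arithmetic function with f(m) ≥ 0 for all m ≥ 1 and f(m) > 0 for all m ≥ 2, and suppose that for all integers m, n ≥ 2 with m ∣ n one has f(m)/log m ≤ f(n)/log n. Then for every prime number p and every positive integer a, the p-adic valuation of a satisfies v_p(a) ≤ f(a)/f(p). -/
/-- **Lemma 1.** Let `f : ℕ → ℝ` be an arithmetic function, nonnegative on positive
integers and positive on integers `≥ 2`, such that `m ↦ f m / log m` is nondecreasing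
with respect to divisibility on integers `≥ 2`. Then for every prime `p` and every
positive integer `a`, the `p`-adic valuation of `a` satisfies `v_p(a) ≤ f a / f p`. -/
theorem padicValNat_le_div (f : ℕ → ℝ)
    (hf0 : ∀ m : ℕ, 1 ≤ m → 0 ≤ f m)
    (hf1 : ∀ m : ℕ, 2 ≤ m → 0 < f m)
    (hmono : ∀ m n : ℕ, 2 ≤ m → 2 ≤ n → m ∣ n →
      f m / Real.log m ≤ f n / Real.log n)
    (p : ℕ) (hp : p.Prime) (a : ℕ) (ha : 0 < a) :
    (padicValNat p a : ℝ) ≤ f a / f p := by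
  set k := padicValNat p a with hk
  rcases Nat.eq_zero_or_pos k with h0 | hkpos
  · rw [h0]
    push_cast
    exact div_nonneg (hf0 a ha) (hf1 p hp.two_le).le
  · have hpa : p ∣ a :=
      dvd_trans (dvd_pow_self p hkpos.ne') pow_padicValNat_dvd
    have ha2 : 2 ≤ a := le_trans hp.two_le (Nat.le_of_dvd ha hpa)
    have hpk : (p : ℕ) ^ k ∣ a := pow_padicValNat_dvd
    have hale : (p : ℕ) ^ k ≤ a := Nat.le_of_dvd ha hpk
    have hlogp : 0 < Real.log p := Real.log_pos (by exact_mod_cast hp.one_lt)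
    have hloga : 0 < Real.log a := Real.log_pos (by exact_mod_cast ha2)
    have hklog : (k : ℝ) * Real.log p ≤ Real.log a := by
      have : Real.log ((p : ℝ) ^ k) ≤ Real.log a :=
        Real.log_le_log (pow_pos (by exact_mod_cast hp.pos) k) (by exact_mod_cast hale)
      rwa [Real.log_pow] at this
    have hfp : 0 < f p := hf1 p hp.two_le
    have hmain := hmono p a hp.two_le ha2 hpa
    -- f p / log p ≤ f a / log a
    rw [le_div_iff₀ hfp]
    rw [div_le_div_iff₀ hlogp hloga] at hmain
    have : (k : ℝ) * f p * Real.log p ≤ f a * Real.log p := by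
      calc (k : ℝ) * f p * Real.log p = ((k : ℝ) * Real.log p) * f p := by ring
        _ ≤ Real.log a * f p := mul_le_mul_of_nonneg_right hklog hfp.le
        _ = f p * Real.log a := by ring
        _ ≤ f a * Real.log p := hmain
    exact le_of_mul_le_mul_right this hlogp
end

section
/- Let f : ℕ → ℝ be an arithmetic function with f(m) ≥ 0 for all m ≥ 1 and f(m) > 0 for all m ≥ 2, and suppose that the map n ↦ f(n)/n is nondecreasing on the integers n ≥ 2 (with respect to the usual order). Then for every real x ≥ 0, the product over all primes p of p^⌊x/f(p)⌋ equals the least common multiple of the set of all products i₁·i₂⋯i_k where k ∈ ℕ and i₁, …, i_k are positive integers satisfying f(i₁) + f(i₂) + ⋯ + f(i_k) ≤ x. -/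
/-!
For a prime `p` and `n ≥ 1` we have `p * v_p(n) ≤ p ^ v_p(n) ≤ n`, so monotonicity of
`f n / n` gives `v_p(n) f(p) ≤ f(n)`. Hence an admissible product `i₁ ⋯ i_k` has
`v_p(i₁ ⋯ i_k) f(p) ≤ f(i₁) + ⋯ + f(i_k) ≤ x`, i.e. `v_p ≤ ⌊x / f(p)⌋`. Conversely
`p ^ ⌊x / f(p)⌋` is itself admissible, as the product of `⌊x / f(p)⌋` copies of `p`.
-/

namespace Nat

theorem finprod_mem_prime_pow_ne_zero (e : ℕ → ℕ) :
    ∏ᶠ p ∈ {p : ℕ | p.Prime}, p ^ e p ≠ 0 := by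
  rw [finprod_mem_def]
  refine finprod_ne_zero fun p => ?_
  by_cases hp : p.Prime
  · rw [Set.mulIndicator_of_mem (show p ∈ {p : ℕ | p.Prime} from hp)]
    exact pow_ne_zero _ hp.ne_zero
  · simp [Set.mulIndicator_of_notMem (show p ∉ {p : ℕ | p.Prime} from hp)]

theorem factorization_finprod_mem_prime_pow {e : ℕ → ℕ}
    (he : {p | p.Prime ∧ e p ≠ 0}.Finite) {p : ℕ} (hp : p.Prime) :
    (∏ᶠ q ∈ {q : ℕ | q.Prime}, q ^ e q).factorization p = e p := by
  have hsupp : {q : ℕ | q.Prime} ∩ Function.mulSupport (fun q => q ^ e q) =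
      {q | q.Prime ∧ e q ≠ 0} := by
    ext q
    simp only [Set.mem_inter_iff, Set.mem_ofPred_eq, Function.mem_mulSupport,
      and_congr_right_iff]
    exact fun hq => by simp [hq.one_lt.ne']
  have hfin : ({q : ℕ | q.Prime} ∩ Function.mulSupport (fun q => q ^ e q)).Finite :=
    hsupp ▸ he
  have hprime : ∀ q ∈ hfin.toFinset, q.Prime := fun q hq => (hfin.mem_toFinset.1 hq).1
  rw [finprod_mem_eq_prod _ hfin,
    factorization_prod fun q hq => pow_ne_zero _ (hprime q hq).ne_zero, Finsupp.finsetSum_apply,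
    Finset.sum_congr rfl fun q hq => by
      rw [(hprime q hq).factorization_pow, Finsupp.single_apply], Finset.sum_ite_eq']
  split_ifs with hmem
  · rfl
  · simp only [hsupp, Set.Finite.mem_toFinset, Set.mem_ofPred_eq, not_and, not_not] at hmem
    exact (hmem hp).symm

theorem dvd_finprod_mem_prime_pow_iff {e : ℕ → ℕ}
    (he : {p | p.Prime ∧ e p ≠ 0}.Finite) {m : ℕ} (hm : m ≠ 0) :
    m ∣ ∏ᶠ p ∈ {p : ℕ | p.Prime}, p ^ e p ↔ ∀ p, p.Prime → m.factorization p ≤ e p := by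
  rw [← factorization_le_iff_dvd hm (finprod_mem_prime_pow_ne_zero e), Finsupp.le_def]
  refine forall_congr' fun p => ?_
  by_cases hp : p.Prime
  · rw [factorization_finprod_mem_prime_pow he hp]
    simp [hp]
  · simp [hp, factorization_eq_zero_of_not_prime]

theorem finprod_mem_prime_pow_dvd_iff {e : ℕ → ℕ}
    (he : {p | p.Prime ∧ e p ≠ 0}.Finite) {N : ℕ} :
    ∏ᶠ p ∈ {p : ℕ | p.Prime}, p ^ e p ∣ N ↔ ∀ p, p.Prime → p ^ e p ∣ N := by
  rcases eq_or_ne N 0 with rfl | hN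
  · simp
  rw [← factorization_le_iff_dvd (finprod_mem_prime_pow_ne_zero e) hN, Finsupp.le_def]
  refine ⟨fun h p hp => ?_, fun h p => ?_⟩
  · rw [hp.pow_dvd_iff_le_factorization hN, ← factorization_finprod_mem_prime_pow he hp]
    exact h p
  · by_cases hp : p.Prime
    · rw [factorization_finprod_mem_prime_pow he hp]
      exact (hp.pow_dvd_iff_le_factorization hN).1 (h p hp)
    · simp [factorization_eq_zero_of_not_prime _ hp]

end Nat

theorem Nat.floor_div_mul_le {K : Type*} [Field K] [LinearOrder K] [IsStrictOrderedRing K]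
    [FloorSemiring K] {x c : K} (hx : 0 ≤ x) (hc : 0 < c) : (⌊x / c⌋₊ : K) * c ≤ x :=
  (le_div_iff₀ hc).1 (Nat.floor_le (div_nonneg hx hc.le))

section DivSelfMono

variable {f : ℕ → ℝ}

theorem finite_setOf_le_of_div_self_mono (hf2 : 0 < f 2)
    (hmono : ∀ n : ℕ, 2 ≤ n → f 2 / 2 ≤ f n / n) (x : ℝ) :
    {n : ℕ | 2 ≤ n ∧ f n ≤ x}.Finite := by
  refine (Set.finite_Iic ⌊2 * x / f 2⌋₊).subset fun n ⟨hn, hfn⟩ => Nat.le_floor ?_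
  have hn0 : (0 : ℝ) < n := by positivity
  rw [le_div_iff₀ hf2]
  calc (n : ℝ) * f 2 = 2 * (n * (f 2 / 2)) := by ring
    _ ≤ 2 * (n * (f n / n)) := by have := hmono n hn; gcongr
    _ = 2 * f n := by field_simp
    _ ≤ 2 * x := by gcongr

theorem factorization_mul_le_of_div_self_le {p n : ℕ} (hp : p.Prime) (hn : n ≠ 0)
    (hfp : 0 ≤ f p) (hfn : 0 ≤ f n) (hmono : p ≤ n → f p / p ≤ f n / n) :
    n.factorization p * f p ≤ f n := by
  set e := n.factorization p
  rcases Nat.eq_zero_or_pos e with he | he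
  · simpa [he] using hfn
  have hpow : p ^ e ≤ n := Nat.ordProj_le p hn
  have hp0 : (0 : ℝ) < p := by exact_mod_cast hp.pos
  have hn0 : (0 : ℝ) < n := by positivity
  calc (e : ℝ) * f p = ((p * e : ℕ) : ℝ) * (f p / p) := by push_cast; field_simp
    _ ≤ ((p ^ e : ℕ) : ℝ) * (f p / p) := by gcongr; exact Nat.mul_le_pow hp.one_lt.ne' e
    _ ≤ n * (f p / p) := by gcongr
    _ ≤ n * (f n / n) := by have := hmono ((Nat.le_self_pow he.ne' p).trans hpow); gcongr
    _ = f n := by field_simp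

theorem factorization_prod_mul_le_sum {ι : Type*} (s : Finset ι) (i : ι → ℕ)
    (hi : ∀ j ∈ s, i j ≠ 0) {p : ℕ} {c : ℝ}
    (hle : ∀ n : ℕ, n ≠ 0 → n.factorization p * c ≤ f n) :
    (∏ j ∈ s, i j).factorization p * c ≤ ∑ j ∈ s, f (i j) := by
  rw [Nat.factorization_prod hi, Finsupp.finsetSum_apply, Nat.cast_sum, Finset.sum_mul]
  exact Finset.sum_le_sum fun j hj => hle _ (hi j hj)

end DivSelfMono

/-- **Corollary 1.** Let `f : ℕ → ℝ` be an arithmetic function, nonnegative on positive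
integers and positive on integers `≥ 2`, such that `n ↦ f n / n` is nondecreasing (for
the usual order) on integers `≥ 2`. Then for every real `x ≥ 0`, the product
`∏_{p prime} p ^ ⌊x / f p⌋` is the least common multiple (in the divisibility order on `ℕ`)
of the set of all products `i₁ ⋯ i_k` with `k ∈ ℕ`, `i₁, …, i_k` positive integers and
`f i₁ + ⋯ + f i_k ≤ x`. -/
theorem prod_primes_eq_lcm_of_div_self_mono (f : ℕ → ℝ)
    (hf0 : ∀ m : ℕ, 1 ≤ m → 0 ≤ f m)
    (hf1 : ∀ m : ℕ, 2 ≤ m → 0 < f m)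
    (hmono : ∀ m n : ℕ, 2 ≤ m → m ≤ n → f m / m ≤ f n / n)
    (x : ℝ) (hx : 0 ≤ x) :
    (∀ (k : ℕ) (i : Fin k → ℕ), (∀ j, 0 < i j) → (∑ j, f (i j)) ≤ x →
        (∏ j, i j) ∣ ∏ᶠ p ∈ {p : ℕ | p.Prime}, p ^ ⌊x / f p⌋₊) ∧
    (∀ N : ℕ, (∀ (k : ℕ) (i : Fin k → ℕ), (∀ j, 0 < i j) → (∑ j, f (i j)) ≤ x →
        (∏ j, i j) ∣ N) →
      (∏ᶠ p ∈ {p : ℕ | p.Prime}, p ^ ⌊x / f p⌋₊) ∣ N) := by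
  have hfin : {p : ℕ | p.Prime ∧ ⌊x / f p⌋₊ ≠ 0}.Finite :=
    (finite_setOf_le_of_div_self_mono (hf1 2 le_rfl) (hmono 2 · le_rfl) x).subset
      fun p ⟨hp, hfloor⟩ => ⟨hp.two_le, (one_le_div (hf1 p hp.two_le)).1
        (Nat.one_le_floor_iff _ |>.1 (Nat.one_le_iff_ne_zero.2 hfloor))⟩
  refine ⟨fun k i hi hsum => ?_, fun N hN => ?_⟩
  · have hi' : ∀ j ∈ Finset.univ, i j ≠ 0 := fun j _ => (hi j).ne'
    rw [Nat.dvd_finprod_mem_prime_pow_iff hfin (Finset.prod_ne_zero_iff.2 hi')]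
    intro p hp
    have hfp := hf1 p hp.two_le
    refine Nat.le_floor ((le_div_iff₀ hfp).2 (le_trans ?_ hsum))
    refine factorization_prod_mul_le_sum _ _ hi' fun n hn => ?_
    exact factorization_mul_le_of_div_self_le hp hn hfp.le (hf0 n (Nat.one_le_iff_ne_zero.2 hn))
      (hmono p n hp.two_le)
  · refine Nat.finprod_mem_prime_pow_dvd_iff hfin |>.2 fun p hp => ?_
    simpa using hN _ (fun _ => p) (fun _ => hp.pos)
      (by simpa using Nat.floor_div_mul_le hx (hf1 p hp.two_le))
end

section
/- For all natural numbers n and k with k ≥ n, one has d_{n,k} = d_{n,n}. -/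
/-- `d n k` is the least common multiple of all products `i₁ ⋯ i_k` where
`i₁, …, i_k` are positive integers with `i₁ + ⋯ + i_k ≤ n + k`.
(Every such tuple has all entries in `[1, n + k]`.) For `k = 0`, `d n 0 = 1`. -/
def d (n k : ℕ) : ℕ :=
  ((Fintype.piFinset fun _ : Fin k => Finset.Icc 1 (n + k)).filter
      fun i => ∑ j, i j ≤ n + k).lcm fun i => ∏ j, i j

lemma d_dvd_succ (n k : ℕ) : d n k ∣ d n (k + 1) := by
  apply Finset.lcm_dvd
  intro i hi
  simp only [Finset.mem_filter, Fintype.mem_piFinset, Finset.mem_Icc] at hi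
  obtain ⟨h1, h2⟩ := hi
  have hmem : Fin.snoc i 1 ∈ ((Fintype.piFinset fun _ : Fin (k+1) =>
      Finset.Icc 1 (n + (k+1))).filter fun i => ∑ j, i j ≤ n + (k+1)) := by
    simp only [Finset.mem_filter, Fintype.mem_piFinset, Finset.mem_Icc]
    constructor
    · intro j
      induction j using Fin.lastCases with
      | last => simp; omega
      | cast j => simpa using ⟨(h1 j).1, (h1 j).2.trans (by omega)⟩
    · rw [Fin.sum_snoc]; omega
  have := Finset.dvd_lcm (f := fun i : Fin (k+1) → ℕ => ∏ j, i j) hmem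
  simp only [Fin.prod_snoc, mul_one] at this
  exact this

lemma succ_dvd_d (n k : ℕ) (h : n ≤ k) : d n (k + 1) ∣ d n k := by
  apply Finset.lcm_dvd
  intro i hi
  simp only [Finset.mem_filter, Fintype.mem_piFinset, Finset.mem_Icc] at hi
  obtain ⟨h1, h2⟩ := hi
  -- some coordinate equals 1
  have hex : ∃ j, i j = 1 := by
    by_contra h'
    push_neg at h'
    have h2le : ∀ j, 2 ≤ i j := fun j => by have := (h1 j).1; have := h' j; omega
    have : 2 * (k + 1) ≤ ∑ j, i j := by
      calc 2 * (k + 1) = ∑ _j : Fin (k+1), 2 := by simp [mul_comm]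
        _ ≤ ∑ j, i j := Finset.sum_le_sum fun j _ => h2le j
    omega
  obtain ⟨j, hj⟩ := hex
  have hsum : ∑ l, i l = 1 + ∑ l : Fin k, i (j.succAbove l) := by
    rw [Fin.sum_univ_succAbove i j, hj]
  have hprod : ∏ l, i l = ∏ l : Fin k, i (j.succAbove l) := by
    rw [Fin.prod_univ_succAbove i j, hj, one_mul]
  have hsum' : ∑ l : Fin k, i (j.succAbove l) ≤ n + k := by omega
  have hmem : (fun l : Fin k => i (j.succAbove l)) ∈ ((Fintype.piFinset fun _ : Fin k =>
      Finset.Icc 1 (n + k)).filter fun i => ∑ j, i j ≤ n + k) := by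
    simp only [Finset.mem_filter, Fintype.mem_piFinset, Finset.mem_Icc]
    refine ⟨fun l => ⟨(h1 _).1, ?_⟩, hsum'⟩
    calc i (j.succAbove l) ≤ ∑ l : Fin k, i (j.succAbove l) :=
          Finset.single_le_sum (f := fun l => i (j.succAbove l)) (fun _ _ => Nat.zero_le _) (Finset.mem_univ l)
      _ ≤ n + k := hsum'
  have := Finset.dvd_lcm (f := fun i : Fin k → ℕ => ∏ j, i j) hmem
  rw [hprod]
  exact this

/-- **Proposition 1 (second part).** For all natural numbers `n` and `k` with `k ≥ n`,
`d n k = d n n`. -/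
theorem d_eq_of_le (n k : ℕ) (h : n ≤ k) : d n k = d n n := by
  induction k, h using Nat.le_induction with
  | base => rfl
  | succ k hk ih =>
    rw [← ih]
    exact Nat.dvd_antisymm (succ_dvd_d n k hk) (d_dvd_succ n k)
end

section
/- For every natural number n, the product over all primes p of p^⌊n/(p−1)⌋ equals the least common multiple of the set of all products i₁·i₂⋯i_n where i₁, …, i_n are positive integers satisfying i₁ + i₂ + ⋯ + i_n ≤ 2n. -/
private lemma pow_lower_bound {q : ℕ} (hq : 1 ≤ q) (e : ℕ) : 1 + e * (q - 1) ≤ q ^ e := by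
  obtain ⟨m, rfl⟩ : ∃ m, q = m + 1 := ⟨q - 1, by omega⟩
  simp only [Nat.add_sub_cancel]
  induction e with
  | zero => simp
  | succ e ih =>
    have h1 : (m + 1) ^ (e + 1) = (m + 1) ^ e * (m + 1) := by ring
    have h2 : (1 + e * m) * (m + 1) ≤ (m + 1) ^ e * (m + 1) := Nat.mul_le_mul_right _ ih
    have h3 : 1 + (e + 1) * m ≤ (1 + e * m) * (m + 1) := by
      calc 1 + (e + 1) * m ≤ 1 + (e + 1) * m + e * m * m := Nat.le_add_right _ _
        _ = (1 + e * m) * (m + 1) := by ring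
    exact le_trans h3 (h1 ▸ h2)

private lemma key_ineq {n q : ℕ} (hq : q.Prime) (i : Fin n → ℕ)
    (h1 : ∀ j, 1 ≤ i j) (hs : ∑ j, i j ≤ 2 * n) :
    ∑ j, (i j).factorization q ≤ n / (q - 1) := by
  have hq2 : 2 ≤ q := hq.two_le
  rw [Nat.le_div_iff_mul_le (by omega : 0 < q - 1)]
  have hterm : ∀ j, 1 + (i j).factorization q * (q - 1) ≤ i j := by
    intro j
    calc 1 + (i j).factorization q * (q - 1) ≤ q ^ (i j).factorization q :=
          pow_lower_bound (by omega) _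
      _ ≤ i j := Nat.le_of_dvd (h1 j) (Nat.ordProj_dvd _ _)
  have hsum : n + (∑ j, (i j).factorization q) * (q - 1) ≤ 2 * n := by
    calc n + (∑ j, (i j).factorization q) * (q - 1)
        = ∑ j : Fin n, (1 + (i j).factorization q * (q - 1)) := by
          rw [Finset.sum_add_distrib, ← Finset.sum_mul]
          simp
      _ ≤ ∑ j, i j := Finset.sum_le_sum fun j _ => hterm j
      _ ≤ 2 * n := hs
  linarith

private lemma ite_sum_eval {n k a : ℕ} (hk : k ≤ n) :
    (∑ j : Fin n, (if (j : ℕ) < k then a else 1)) = k * a + (n - k) := by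
  rw [Fin.sum_univ_eq_sum_range (fun j => if j < k then a else 1) n,
    Finset.range_eq_Ico, ← Finset.sum_Ico_consecutive _ (Nat.zero_le k) hk,
    Finset.sum_congr rfl (fun j hj => if_pos (Finset.mem_Ico.mp hj).2),
    Finset.sum_congr rfl (g := fun _ => 1)
      (fun j hj => if_neg (by simpa using (Finset.mem_Ico.mp hj).1))]
  simp [mul_comm]

private lemma ite_prod_eval {n k a : ℕ} (hk : k ≤ n) :
    (∏ j : Fin n, (if (j : ℕ) < k then a else 1)) = a ^ k := by
  rw [Fin.prod_univ_eq_prod_range (fun j => if j < k then a else 1) n,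
    Finset.range_eq_Ico, ← Finset.prod_Ico_consecutive _ (Nat.zero_le k) hk,
    Finset.prod_congr rfl (fun j hj => if_pos (Finset.mem_Ico.mp hj).2),
    Finset.prod_congr rfl (g := fun _ => 1)
      (fun j hj => if_neg (by simpa using (Finset.mem_Ico.mp hj).1))]
  simp

/-- **Corollary 2.** For every natural number `n`,
`∏_{p prime} p ^ ⌊n / (p - 1)⌋` equals the least common multiple of all products
`i₁ ⋯ i_n` where `i₁, …, i_n` are positive integers with `i₁ + ⋯ + i_n ≤ 2n`.
(Here `n / (p - 1)` is natural division, i.e. `⌊n / (p - 1)⌋`, and every tuple of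
positive integers with sum `≤ 2n` has all entries in `[1, 2n]`.) -/
theorem finprod_primes_eq_lcm (n : ℕ) :
    (∏ᶠ p ∈ {p : ℕ | p.Prime}, p ^ (n / (p - 1))) =
      ((Fintype.piFinset fun _ : Fin n => Finset.Icc 1 (2 * n)).filter
          fun i => ∑ j, i j ≤ 2 * n).lcm fun i => ∏ j, i j := by
  classical
  obtain ⟨F, hF⟩ : ∃ F : Finset ℕ, F = (Finset.range (n + 2)).filter Nat.Prime := ⟨_, rfl⟩
  obtain ⟨B, hB⟩ : ∃ B : ℕ, B = ∏ p ∈ F, p ^ (n / (p - 1)) := ⟨_, rfl⟩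
  obtain ⟨S, hS⟩ : ∃ S : Finset (Fin n → ℕ),
      S = ((Fintype.piFinset fun _ : Fin n => Finset.Icc 1 (2 * n)).filter
        fun i => ∑ j, i j ≤ 2 * n) := ⟨_, rfl⟩
  obtain ⟨L, hL⟩ : ∃ L : ℕ, L = S.lcm fun i => ∏ j, i j := ⟨_, rfl⟩
  rw [← hS, ← hL]
  have hFprime : ∀ p ∈ F, p.Prime := fun p hp => (Finset.mem_filter.mp (hF ▸ hp)).2
  have hFne : ∀ p ∈ F, p ^ (n / (p - 1)) ≠ 0 := fun p hp =>
    pow_ne_zero _ (hFprime p hp).pos.ne'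
  -- Step 1: the finprod equals B
  have hfin : (∏ᶠ p ∈ {p : ℕ | p.Prime}, p ^ (n / (p - 1))) = B := by
    have hsub : ({p : ℕ | p.Prime} ∩ Function.mulSupport fun p => p ^ (n / (p - 1))) ⊆ ↑F := by
      intro p hp
      obtain ⟨hp1, hp2⟩ := hp
      simp only [Function.mem_mulSupport] at hp2
      rw [hF]
      simp only [Finset.coe_filter, Finset.mem_range, Set.mem_setOf_eq, Finset.mem_coe]
      refine ⟨?_, hp1⟩
      by_contra h
      push_neg at h
      have : n / (p - 1) = 0 := Nat.div_eq_of_lt (by clear hL; omega)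
      simp [this] at hp2
    have hfinite : ({p : ℕ | p.Prime} ∩ Function.mulSupport fun p => p ^ (n / (p - 1))).Finite :=
      Set.Finite.subset F.finite_toSet hsub
    rw [finprod_mem_eq_prod _ hfinite, hB]
    apply Finset.prod_subset
    · intro p hp
      exact hsub (hfinite.mem_toFinset.mp hp)
    · intro p hpF hp
      rw [hfinite.mem_toFinset] at hp
      simp only [Set.mem_inter_iff, Function.mem_mulSupport, not_and] at hp
      by_contra h
      exact (hp (hFprime p hpF)) h
  rw [hfin, hL]
  -- basic facts
  have hBne : B ≠ 0 := by
    rw [hB]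
    exact Finset.prod_ne_zero_iff.mpr hFne
  have hSmem : ∀ i ∈ S, (∀ j, 1 ≤ i j) ∧ ∑ j, i j ≤ 2 * n := by
    intro i hi
    rw [hS, Finset.mem_filter, Fintype.mem_piFinset] at hi
    exact ⟨fun j => (Finset.mem_Icc.mp (hi.1 j)).1, hi.2⟩
  have hLne : L ≠ 0 := by
    rw [hL, Ne, Finset.lcm_eq_zero_iff]
    rintro ⟨i, hi, hprod⟩
    have h1 := (hSmem i hi).1
    have hne : (∏ j, i j) ≠ 0 :=
      Finset.prod_ne_zero_iff.mpr fun j _ => Nat.one_le_iff_ne_zero.mp (h1 j)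
    exact hne (by simpa using hprod)
  -- B.factorization at a prime q is n / (q - 1)
  have hBfact : ∀ q : ℕ, q.Prime → B.factorization q = n / (q - 1) := by
    intro q hq
    have h1 : B.factorization = ∑ p ∈ F, Finsupp.single p (n / (p - 1)) := by
      rw [hB, Nat.factorization_prod hFne]
      exact Finset.sum_congr rfl fun p hp => Nat.Prime.factorization_pow (hFprime p hp)
    rw [h1, Finsupp.finset_sum_apply]
    rw [Finset.sum_congr rfl (fun p _ => Finsupp.single_apply (a := p) (a' := q))]
    rw [Finset.sum_ite_eq' F q (fun p => n / (p - 1))]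
    split
    · rfl
    · next hqF =>
      have : n + 2 ≤ q := by
        by_contra h
        exact hqF (hF ▸ Finset.mem_filter.mpr ⟨Finset.mem_range.mpr (by clear hL; omega), hq⟩)
      rw [Nat.div_eq_of_lt (by clear hL; omega)]
  rw [← hL]
  apply Nat.dvd_antisymm
  -- B ∣ L
  · rw [← Nat.factorization_le_iff_dvd hBne hLne, Finsupp.le_def]
    intro q
    by_cases hq : q.Prime
    · rw [hBfact q hq]
      obtain ⟨k, hk⟩ : ∃ k, k = n / (q - 1) := ⟨_, rfl⟩
      rw [← hk]
      rcases Nat.eq_zero_or_pos k with hk0 | hk0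
      · simp [hk0]
      have hq2 : 2 ≤ q := hq.two_le
      have hkn : k ≤ n := hk ▸ Nat.div_le_self n (q - 1)
      have hqn : q ≤ n + 1 := by
        by_contra h
        push_neg at h
        rw [hk, Nat.div_eq_of_lt (by clear hL; omega)] at hk0
        exact Nat.lt_irrefl 0 hk0
      have hn1 : 1 ≤ n := by clear hL; omega
      have hsum := ite_sum_eval (a := q) hkn
      have hprod := ite_prod_eval (a := q) hkn
      have htS : (fun j : Fin n => if (j : ℕ) < k then q else 1) ∈ S := by
        rw [hS, Finset.mem_filter, Fintype.mem_piFinset]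
        constructor
        · intro j
          simp only [Finset.mem_Icc]
          constructor
          · split <;> (clear hL; omega)
          · split <;> (clear hL; omega)
        · rw [hsum]
          have hmul : k * (q - 1) ≤ n := hk ▸ Nat.div_mul_le_self n (q - 1)
          have heq : k * (q - 1) + k = k * q := by
            rw [← Nat.mul_succ]
            congr 1
            clear hL
            omega
          clear hL hsum hprod hS hB hF hfin hBne hSmem hLne hBfact
          generalize k * q = a at heq ⊢
          generalize k * (q - 1) = b at heq hmul
          omega
      have hdvd : q ^ k ∣ L := by
        rw [hL]
        simpa only [hprod] using
          Finset.dvd_lcm (f := fun i : Fin n → ℕ => ∏ j, i j) htS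
      have hfle := (Nat.factorization_le_iff_dvd (pow_ne_zero _ hq.pos.ne') hLne).mpr hdvd
      have h2 := hfle q
      rwa [Nat.Prime.factorization_pow hq, Finsupp.single_eq_same] at h2
    · rw [Nat.factorization_eq_zero_of_not_prime B hq]
      exact Nat.zero_le _
  -- L ∣ B
  · rw [hL]
    apply Finset.lcm_dvd
    intro i hi
    obtain ⟨h1, hs⟩ := hSmem i hi
    have hine : ∀ j ∈ Finset.univ, i j ≠ 0 := fun j _ => Nat.one_le_iff_ne_zero.mp (h1 j)
    have hane : (∏ j, i j) ≠ 0 := Finset.prod_ne_zero_iff.mpr hine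
    rw [← Nat.factorization_le_iff_dvd hane hBne, Finsupp.le_def]
    intro q
    by_cases hq : q.Prime
    · rw [hBfact q hq, Nat.factorization_prod hine, Finsupp.finset_sum_apply]
      exact key_ineq hq i h1 hs
    · rw [Nat.factorization_eq_zero_of_not_prime _ hq]
      exact Nat.zero_le _
end

section
/- For every natural number n, n! divides σ_n and σ_n divides (2n)!. -/
open Nat

/-- `σ n := ∏_{p prime} p ^ ⌊n / (p - 1)⌋` (only finitely many primes, those with
`p ≤ n + 1`, have a nonzero exponent; `n / (p - 1)` is natural division). -/
noncomputable def sigma' (n : ℕ) : ℕ := ∏ᶠ p ∈ {p : ℕ | p.Prime}, p ^ (n / (p - 1))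

lemma key_sum {p : ℕ} (hp : 2 ≤ p) :
    ∀ (n : ℕ) {b : ℕ}, Nat.log p (2 * n) < b →
      n / (p - 1) ≤ ∑ i ∈ Finset.Ico 1 b, 2 * n / p ^ i := by
  intro n
  induction n using Nat.strong_induction_on with
  | _ n ih =>
    intro b hb
    rcases lt_or_ge n (p - 1) with h | h
    · simp [Nat.div_eq_of_lt h]
    · set m := n - (p - 1) with hm
      have hmn : m < n := by omega
      have hlog : Nat.log p (2 * m) < b :=
        lt_of_le_of_lt (Nat.log_mono_right (by omega)) hb
      have h2b : 2 ≤ b := by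
        have h1 : 1 ≤ Nat.log p (2 * n) := by
          have hpn : p ^ 1 ≤ 2 * n := by simpa using (by omega : p ≤ 2 * n)
          exact Nat.le_log_of_pow_le hp hpn
        omega
      have hdiv : n / (p - 1) = m / (p - 1) + 1 := by
        rw [hm, Nat.div_eq_sub_div (by omega) h]
      have hsplit : ∀ k : ℕ, ∑ i ∈ Finset.Ico 1 b, 2 * k / p ^ i
          = 2 * k / p + ∑ i ∈ Finset.Ico 2 b, 2 * k / p ^ i := by
        intro k
        rw [← Finset.sum_Ico_consecutive _ (by norm_num : (1:ℕ) ≤ 2) h2b]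
        congr 1
        rw [show Finset.Ico 1 2 = {1} from rfl, Finset.sum_singleton, pow_one]
      have hstep : 2 * m / p + 1 ≤ 2 * n / p := by
        have : 2 * m / p + 1 = (2 * m + p) / p := by
          rw [Nat.add_div_right _ (by omega)]
        rw [this]
        exact Nat.div_le_div_right (by omega)
      have hrest : ∑ i ∈ Finset.Ico 2 b, 2 * m / p ^ i
          ≤ ∑ i ∈ Finset.Ico 2 b, 2 * n / p ^ i :=
        Finset.sum_le_sum fun i _ => Nat.div_le_div_right (by omega)
      calc n / (p - 1) = m / (p - 1) + 1 := hdiv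
        _ ≤ (∑ i ∈ Finset.Ico 1 b, 2 * m / p ^ i) + 1 := by
            exact Nat.add_le_add_right (ih m hmn hlog) 1
        _ = (2 * m / p + 1) + ∑ i ∈ Finset.Ico 2 b, 2 * m / p ^ i := by
            rw [hsplit]; ring
        _ ≤ 2 * n / p + ∑ i ∈ Finset.Ico 2 b, 2 * n / p ^ i :=
            Nat.add_le_add hstep hrest
        _ = ∑ i ∈ Finset.Ico 1 b, 2 * n / p ^ i := (hsplit n).symm

/-- **Proposition 2 (iii).** For every natural number `n`, `n!` divides `σ n` and
`σ n` divides `(2n)!`. -/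
theorem factorial_dvd_sigma_and_sigma_dvd_factorial (n : ℕ) :
    n ! ∣ sigma' n ∧ sigma' n ∣ (2 * n)! := by
  classical
  set T : Finset ℕ := (Finset.range (n + 2)).filter Nat.Prime with hT
  have hTprime : ∀ p ∈ T, p.Prime := by
    intro p hp; rw [hT, Finset.mem_filter] at hp; exact hp.2
  have hσ : sigma' n = ∏ p ∈ T, p ^ (n / (p - 1)) := by
    apply finprod_mem_eq_prod_of_subset
    · rintro p ⟨hp1, hp2⟩
      simp only [Set.mem_setOf_eq] at hp1
      rw [Function.mem_mulSupport] at hp2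
      rw [hT, Finset.coe_filter]
      refine ⟨?_, hp1⟩
      simp only [Finset.mem_coe, Finset.mem_range]
      by_contra hc
      push_neg at hc
      have hz : n / (p - 1) = 0 := Nat.div_eq_of_lt (by omega)
      exact hp2 (by rw [hz, pow_zero])
    · intro p hp
      exact hTprime p hp
  have hσpos : sigma' n ≠ 0 := by
    rw [hσ]
    exact Finset.prod_ne_zero_iff.2 fun p hp =>
      pow_ne_zero _ (hTprime p hp).pos.ne'
  have hσfact : ∀ q : ℕ, (sigma' n).factorization q
      = if q ∈ T then n / (q - 1) else 0 := by
    intro q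
    rw [hσ, Nat.factorization_prod (fun p hp => pow_ne_zero _ (hTprime p hp).pos.ne')]
    rw [Finsupp.finset_sum_apply]
    rw [Finset.sum_congr rfl (fun p hp => by
      rw [Nat.Prime.factorization_pow (hTprime p hp), Finsupp.single_apply])]
    exact Finset.sum_ite_eq' T q fun p => n / (p - 1)
  constructor
  · -- n ! ∣ sigma' n
    rw [← Nat.factorization_le_iff_dvd (Nat.factorial_ne_zero n) hσpos]
    intro q
    rcases Nat.eq_zero_or_pos ((n !).factorization q) with h0 | hpos
    · simp [h0]
    have hq : q.Prime := by
      by_contra hq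
      rw [Nat.factorization_eq_zero_of_not_prime _ hq] at hpos; omega
    have hqn : q ≤ n := by
      by_contra hc
      push_neg at hc
      rw [Nat.factorization_factorial_eq_zero_of_lt hc] at hpos; omega
    have hqT : q ∈ T := by
      rw [hT, Finset.mem_filter, Finset.mem_range]; exact ⟨by omega, hq⟩
    have hle : (n !).factorization q ≤ n / (q - 1) := by
      have h1 : q ^ ((n !).factorization q) ∣ n ! := Nat.ordProj_dvd _ _
      have hlog : Nat.log q n < n + 1 := Nat.lt_succ_of_le (Nat.log_le_self q n)
      rw [Nat.Prime.pow_dvd_factorial_iff hq hlog] at h1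
      exact h1.trans (Nat.geom_sum_Ico_le hq.two_le _ _)
    rw [hσfact, if_pos hqT]
    exact hle
  · -- sigma' n ∣ (2 * n)!
    rw [← Nat.factorization_le_iff_dvd hσpos (Nat.factorial_ne_zero _)]
    intro q
    rw [hσfact]
    by_cases hqT : q ∈ T
    · rw [if_pos hqT]
      have hq := hTprime q hqT
      have hlog : Nat.log q (2 * n) < 2 * n + 1 :=
        Nat.lt_succ_of_le (Nat.log_le_self q (2 * n))
      have hkey : n / (q - 1) ≤ ∑ i ∈ Finset.Ico 1 (2 * n + 1), 2 * n / q ^ i :=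
        key_sum hq.two_le n hlog
      have hdvd : q ^ (n / (q - 1)) ∣ (2 * n)! := by
        rw [Nat.Prime.pow_dvd_factorial_iff hq hlog]
        exact hkey
      rw [← Nat.Prime.pow_dvd_iff_le_factorization hq (Nat.factorial_ne_zero _)]
      exact hdvd
    · rw [if_neg hqT]
      exact Nat.zero_le _
end

section
/- For every natural number n, (n+1)! divides σ_n, and σ_n divides n!·lcm(1, 2, …, n, n+1). -/
open Nat

/-!
Compare `p`-adic valuations one prime at a time. Legendre's formula
`(p - 1) * v_p(m!) = m - s_p(m)`, with `s_p` the base-`p` digit sum, and `s_p(n + 1) ≥ 1` give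
`v_p((n + 1)!) ≤ ⌊n / (p - 1)⌋`. In the other direction
`⌊n / (p - 1)⌋ = v_p(n!) + ⌊s_p(n) / (p - 1)⌋` and `v_p(lcm(1, …, n + 1)) = log_p(n + 1)`,
so it remains to see `⌊s_p(n) / (p - 1)⌋ ≤ log_p(n + 1)`. If `n` has `L` digits then
`s_p(n) ≤ (p - 1) L`, with equality only when all digits are `p - 1`, i.e. `n + 1 = p ^ L`;
otherwise `⌊s_p(n) / (p - 1)⌋ < L` and `p ^ (L - 1) ≤ n`.
-/

namespace Nat

variable {b : ℕ}

theorem sum_digits_le_sub_one_mul_length (hb : 1 < b) (n : ℕ) :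
    (b.digits n).sum ≤ (b - 1) * (b.digits n).length := by
  rw [mul_comm, ← smul_eq_mul]
  exact List.sum_le_card_nsmul _ _ fun d hd => le_sub_one_of_lt (digits_lt_base hb hd)

theorem pow_length_digits_le_succ_of_le_sum (hb : 1 < b) {n : ℕ}
    (h : (b - 1) * (b.digits n).length ≤ (b.digits n).sum) :
    b ^ (b.digits n).length ≤ n + 1 := by
  induction n using Nat.strong_induction_on with
  | _ n ih =>
  rcases n.eq_zero_or_pos with rfl | hn
  · simp
  rw [digits_def' hb hn] at h ⊢
  simp only [List.length_cons, List.sum_cons, mul_add_one] at h ⊢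
  have hlow : n % b ≤ b - 1 := le_sub_one_of_lt (mod_lt n (by omega))
  have htail := sum_digits_le_sub_one_mul_length hb (n / b)
  have hhigh := ih (n / b) (div_lt_self hn hb) (by omega)
  have hlast : n % b = b - 1 := by omega
  calc b ^ ((b.digits (n / b)).length + 1) = b * b ^ (b.digits (n / b)).length := Nat.pow_succ'
    _ ≤ b * (n / b + 1) := Nat.mul_le_mul_left _ hhigh
    _ = n + 1 := by have := div_add_mod n b; rw [mul_add_one]; omega

theorem sum_digits_div_le_log (hb : 1 < b) (n : ℕ) :
    (b.digits n).sum / (b - 1) ≤ b.log (n + 1) := by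
  rw [le_log_iff_pow_le hb n.succ_ne_zero]
  have hsum := sum_digits_le_sub_one_mul_length hb n
  by_cases hmax : (b - 1) * (b.digits n).length ≤ (b.digits n).sum
  · calc b ^ ((b.digits n).sum / (b - 1)) ≤ b ^ (b.digits n).length :=
          Nat.pow_le_pow_right (by omega) (Nat.div_le_of_le_mul hsum)
      _ ≤ n + 1 := pow_length_digits_le_succ_of_le_sum hb hmax
  · have hn : n ≠ 0 := by rintro rfl; simp at hmax
    have hlt : (b.digits n).sum / (b - 1) < (b.digits n).length :=
      (Nat.div_lt_iff_lt_mul (by omega)).2 (by rw [mul_comm]; omega)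
    have : b * b ^ ((b.digits n).sum / (b - 1)) ≤ b * n :=
      calc b * b ^ ((b.digits n).sum / (b - 1)) = b ^ ((b.digits n).sum / (b - 1) + 1) :=
            Nat.pow_succ'.symm
        _ ≤ b ^ (b.digits n).length := Nat.pow_le_pow_right (by omega) hlt
        _ ≤ b * n := base_pow_length_digits_le b n hb hn
    exact (Nat.le_of_mul_le_mul_left this (by omega)).trans n.le_succ

end Nat

section Legendre

variable {p : ℕ} [hp : Fact p.Prime]

theorem padicValNat_factorial_succ_le_div (n : ℕ) :
    padicValNat p (n + 1)! ≤ n / (p - 1) :=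
  (Nat.le_div_iff_mul_le (Nat.sub_pos_of_lt hp.out.one_lt)).2 <| by
    rw [mul_comm]
    exact Nat.lt_succ_iff.1 (sub_one_mul_padicValNat_factorial_lt_of_ne_zero p n.succ_ne_zero)

theorem div_sub_one_le_padicValNat_factorial_add_log (n : ℕ) :
    n / (p - 1) ≤ padicValNat p n ! + p.log (n + 1) := by
  have hp1 : 0 < p - 1 := Nat.sub_pos_of_lt hp.out.one_lt
  have hn : n = (p.digits n).sum + (p - 1) * padicValNat p n ! := by
    rw [sub_one_mul_padicValNat_factorial]; have := digit_sum_le p n; omega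
  calc n / (p - 1) = (p.digits n).sum / (p - 1) + padicValNat p n ! := by
        conv_lhs => rw [hn]
        exact Nat.add_mul_div_left _ _ hp1
    _ ≤ p.log (n + 1) + padicValNat p n ! := by
        gcongr; exact sum_digits_div_le_log hp.out.one_lt n
    _ = _ := add_comm _ _

end Legendre

theorem sigma'_eq_prod (n : ℕ) :
    sigma' n = ∏ p ∈ (Finset.range (n + 2)).filter Nat.Prime, p ^ (n / (p - 1)) := by
  refine finprod_mem_eq_prod_of_subset _ (fun p ⟨hp, hne⟩ => ?_) (fun p hp => ?_)
  · have hexp : n / (p - 1) ≠ 0 := fun h => hne (by simp [h])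
    refine Finset.mem_filter.2 ⟨Finset.mem_range.2 ?_, hp⟩
    by_contra hlarge
    exact hexp (Nat.div_eq_of_lt (by omega))
  · exact (Finset.mem_filter.1 hp).2

theorem sigma'_ne_zero (n : ℕ) : sigma' n ≠ 0 := by
  rw [sigma'_eq_prod]
  exact Finset.prod_ne_zero_iff.2 fun p hp => pow_ne_zero _ (Finset.mem_filter.1 hp).2.ne_zero

theorem factorization_sigma' (n : ℕ) {p : ℕ} (hp : p.Prime) :
    (sigma' n).factorization p = n / (p - 1) := by
  rw [sigma'_eq_prod,
    factorization_prod fun q hq => pow_ne_zero _ (Finset.mem_filter.1 hq).2.ne_zero,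
    Finset.sum_apply']
  have hterm : ∀ q ∈ (Finset.range (n + 2)).filter Nat.Prime,
      (q ^ (n / (q - 1))).factorization p = if q = p then n / (q - 1) else 0 := fun q hq => by
    rw [(Finset.mem_filter.1 hq).2.factorization_pow, Finsupp.single_apply]
  rw [Finset.sum_congr rfl hterm, Finset.sum_ite_eq']
  split_ifs with hmem
  · rfl
  · simp only [Finset.mem_filter, Finset.mem_range, hp, and_true, not_lt] at hmem
    exact (Nat.div_eq_of_lt (by omega)).symm

/-- **Proposition 3.** For every natural number `n`, `(n+1)!` divides `σ n` and
`σ n` divides `n! · lcm(1, 2, …, n, n+1)`. -/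
theorem succ_factorial_dvd_sigma_and_sigma_dvd (n : ℕ) :
    (n + 1)! ∣ sigma' n ∧ sigma' n ∣ n ! * (Finset.Icc 1 (n + 1)).lcm id := by
  have hσ := sigma'_ne_zero n
  change (n + 1)! ∣ sigma' n ∧ sigma' n ∣ n ! * lcmUpto (n + 1)
  constructor
  · refine (factorization_prime_le_iff_dvd (factorial_ne_zero _) hσ).1 fun p hp => ?_
    have := Fact.mk hp
    rw [factorization_sigma' n hp, factorization_def _ hp]
    exact padicValNat_factorial_succ_le_div n
  · refine (factorization_prime_le_iff_dvd hσ
      (mul_ne_zero (factorial_ne_zero n) (lcmUpto_ne_zero _))).1 fun p hp => ?_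
    have := Fact.mk hp
    rw [factorization_sigma' n hp, Nat.factorization_mul (factorial_ne_zero n) (lcmUpto_ne_zero _),
      Finsupp.add_apply, factorization_def _ hp, factorization_lcmUpto _ hp]
    exact div_sub_one_le_padicValNat_factorial_add_log n
end

section
/- As n → ∞, log σ_n is asymptotically equivalent to n·log n, i.e., (log σ_n)/(n log n) → 1. -/
open Nat Filter

/-!
Legendre's bound `v_p(n!) ≤ ⌊n/(p-1)⌋` gives `n! ≤ σ_n`, hence `log σ_n ≥ log n! ≥ n log n - n`.
Conversely, Legendre's formula `(p-1) v_p(n!) = n - s_p(n)`, with the base-`p` digit sum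
`s_p(n) ≤ (p-1)(log_p n + 1)`, gives `⌊n/(p-1)⌋ ≤ v_p(n!) + log_p n + 1`. Weighting by `log p`
and summing over `p ≤ n + 1` yields `log σ_n ≤ log n! + ψ(n+1) + θ(n+1) ≤ n log n + O(n)` by
Chebyshev's bounds, and `n = o(n log n)`.
-/

open Finset Real Asymptotics Chebyshev

theorem Nat.sum_digits_le_sub_one_mul_succ_log {b : ℕ} (hb : 1 < b) (n : ℕ) :
    (b.digits n).sum ≤ (b - 1) * (b.log n + 1) := by
  rcases eq_or_ne n 0 with rfl | hn
  · simp
  calc (b.digits n).sum ≤ (b.digits n).length • (b - 1) :=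
        List.sum_le_card_nsmul _ _ fun d hd ↦ Nat.le_sub_one_of_lt (Nat.digits_lt_base hb hd)
    _ = (b - 1) * (b.log n + 1) := by rw [Nat.length_digits b n hb hn, smul_eq_mul, mul_comm]

theorem Nat.div_pred_le_factorization_factorial_add_log {p : ℕ} (hp : p.Prime) (n : ℕ) :
    n / (p - 1) ≤ (n !).factorization p + p.log n + 1 := by
  have hdigits := Nat.sum_digits_le_sub_one_mul_succ_log hp.one_lt n
  have hlegendre := Nat.sub_one_mul_factorization_factorial (n := n) hp
  have hsum_le := Nat.digit_sum_le p n
  refine Nat.div_le_of_le_mul ?_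
  rw [add_assoc, mul_add, hlegendre]
  omega

theorem Real.log_natCast_prod_pow {s : Finset ℕ} (hs : ∀ p ∈ s, p ≠ 0) (e : ℕ → ℕ) :
    Real.log (∏ p ∈ s, p ^ e p : ℕ) = ∑ p ∈ s, (e p : ℝ) * Real.log p := by
  push_cast
  rw [Real.log_prod fun p hp ↦ by have := hs p hp; positivity]
  simp [Real.log_pow]

theorem sigma'_eq_prod_primesLE (n : ℕ) :
    sigma' n = ∏ p ∈ primesLE (n + 1), p ^ (n / (p - 1)) := by
  refine finprod_mem_eq_prod_of_inter_mulSupport_eq _ (Set.ext fun p ↦ ?_)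
  simp only [Set.mem_inter_iff, Set.mem_ofPred_eq, Function.mem_mulSupport, mem_coe, mem_primesLE]
  constructor
  · rintro ⟨hp, hne⟩
    refine ⟨⟨?_, hp⟩, hne⟩
    by_contra! h
    simp [Nat.div_eq_of_lt (show n < p - 1 by omega)] at hne
  · rintro ⟨⟨_, hp⟩, hne⟩
    exact ⟨hp, hne⟩

theorem log_sigma'_eq_sum (n : ℕ) :
    Real.log (sigma' n) = ∑ p ∈ primesLE (n + 1), ((n / (p - 1) : ℕ) : ℝ) * Real.log p := by
  rw [sigma'_eq_prod_primesLE,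
    Real.log_natCast_prod_pow fun _ hp ↦ (prime_of_mem_primesLE hp).ne_zero]

theorem log_factorial_eq_sum (n : ℕ) :
    Real.log (n ! : ℕ) = ∑ p ∈ primesLE (n + 1), ((n !).factorization p : ℝ) * Real.log p := by
  rw [Real.log_nat_eq_sum_factorization]
  refine Finsupp.sum_of_support_subset _ (fun p hp ↦ ?_) _ fun _ _ ↦ by simp
  rw [support_factorization, mem_primeFactors] at hp
  exact mem_primesLE.2 ⟨by linarith [(hp.1.dvd_factorial).1 hp.2.1], hp.1⟩

theorem log_factorial_le_log_sigma' (n : ℕ) : Real.log (n ! : ℕ) ≤ Real.log (sigma' n) := by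
  rw [log_factorial_eq_sum, log_sigma'_eq_sum]
  gcongr with p hp
  exact factorization_factorial_le_div_pred (prime_of_mem_primesLE hp) n

theorem log_sigma'_le (n : ℕ) :
    Real.log (sigma' n) ≤ Real.log (n ! : ℕ) + ψ (n + 1 : ℕ) + θ (n + 1 : ℕ) := by
  rw [log_sigma'_eq_sum, log_factorial_eq_sum, psi_eq_sum_mul_log_prime,
    theta_eq_sum_primesLE_log, ← sum_add_distrib, ← sum_add_distrib]
  gcongr with p hp
  have hp := prime_of_mem_primesLE hp
  have hdiv : ((n / (p - 1) : ℕ) : ℝ) ≤ (n !).factorization p + p.log (n + 1) + 1 := by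
    exact_mod_cast (div_pred_le_factorization_factorial_add_log hp n).trans (by gcongr; omega)
  have hlog : 0 ≤ Real.log p := Real.log_natCast_nonneg p
  nlinarith

theorem log_factorial_le_mul_log (n : ℕ) : Real.log (n ! : ℕ) ≤ n * Real.log n := by
  rcases eq_or_ne n 0 with rfl | hn
  · simp
  rw [← Real.log_pow, ← Nat.cast_pow]
  exact Real.log_le_log (by positivity) (mod_cast factorial_le_pow n)

theorem mul_log_sub_le_log_factorial (n : ℕ) : n * Real.log n - n ≤ Real.log (n ! : ℕ) := by
  rcases eq_or_ne n 0 with rfl | hn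
  · simp
  have hstirling := Stirling.le_log_factorial_stirling hn
  have h2π : 0 ≤ Real.log (2 * π) := Real.log_nonneg (by linarith [pi_gt_three])
  have hlog : 0 ≤ Real.log n := Real.log_natCast_nonneg n
  linarith

theorem abs_log_sigma'_sub_mul_log_le (n : ℕ) :
    |Real.log (sigma' n) - n * Real.log n| ≤ (2 * Real.log 4 + 4) * (n + 1) := by
  have hψ := psi_le_const_mul_self (x := (n + 1 : ℕ)) (Nat.cast_nonneg _)
  have hθ := theta_le_log4_mul_x (x := (n + 1 : ℕ)) (Nat.cast_nonneg _)
  have hσ := log_sigma'_le n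
  push_cast at hψ hθ hσ
  have hlog4 : 0 ≤ Real.log 4 := Real.log_nonneg (by norm_num)
  rw [abs_sub_le_iff]
  constructor
  · linarith [log_factorial_le_mul_log n]
  · nlinarith [mul_log_sub_le_log_factorial n, log_factorial_le_log_sigma' n]

/-- **Corollary 3.** As `n → ∞`, `log σ n` is asymptotically equivalent to `n log n`,
i.e. `(log σ n) / (n log n) → 1`. -/
theorem log_sigma_asymp :
    Tendsto (fun n : ℕ => Real.log (sigma' n) / (n * Real.log n)) atTop (nhds 1) := by
  have hO : (fun n : ℕ ↦ Real.log (sigma' n) - n * Real.log n) =O[atTop] fun n ↦ (n : ℝ) := by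
    refine IsBigO.of_bound (2 * (2 * Real.log 4 + 4)) ?_
    filter_upwards [eventually_ge_atTop 1] with n hn
    have hn : (1 : ℝ) ≤ n := mod_cast hn
    have hlog4 : 0 ≤ Real.log 4 := Real.log_nonneg (by norm_num)
    rw [Real.norm_eq_abs, Real.norm_natCast]
    nlinarith [abs_log_sigma'_sub_mul_log_le n]
  have ho : (fun n : ℕ ↦ (n : ℝ)) =o[atTop] fun n ↦ n * Real.log n := by
    simpa using (isBigO_refl (fun n : ℕ ↦ (n : ℝ)) atTop).mul_isLittleO
      (Real.isLittleO_const_log_atTop (c := 1) |>.comp_tendsto tendsto_natCast_atTop_atTop)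
  refine (isEquivalent_iff_tendsto_one ?_).mp (hO.trans_isLittleO ho)
  filter_upwards [eventually_gt_atTop 1] with n hn
  have hn : (1 : ℝ) < n := mod_cast hn
  exact mul_ne_zero (by positivity) (Real.log_pos hn).ne'
end

section
/- Let c := ∑_{p prime} (log p)/(p(p−1)). Then, as n ranges over the positive integers, ∑_{p prime} (⌊n/p²⌋ + ⌊n/p³⌋ + ⌊n/p⁴⌋ + ⋯)·log p = c·n + O(√n); that is, there is a constant M > 0 such that for all positive integers n, |∑_{p prime} ∑_{i ≥ 2} ⌊n/pⁱ⌋·log p − c·n| ≤ M·√n. -/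
/-- The constant `c := ∑_{p prime} (log p) / (p (p - 1))` (a convergent series). -/
noncomputable def cconst : ℝ :=
  ∑' p : {p : ℕ // p.Prime}, Real.log (p : ℕ) / (((p : ℕ) : ℝ) * (((p : ℕ) : ℝ) - 1))

/-!
Since `log p / (p (p - 1)) = ∑_{i ≥ 2} log p / pⁱ`, the difference
`c n - ∑_p ∑_{i ≥ 2} ⌊n/pⁱ⌋ log p` is `∑_p ∑_{i ≥ 2} {n/pⁱ} log p ≥ 0`. A prime `p > √n` contributes `n log p / (p (p - 1))`, and
Chebyshev's bound `θ x ≤ x log 4` with summation by parts gives `∑_{p > √n} log p / p² ≪ 1/√n`.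
For `p ≤ √n` each exponent `i ≥ 2` with `pⁱ ≤ n` loses at most `log p`, in total at most
`ψ n - θ n ≪ √n`, and the geometric tail of the remaining exponents loses at most `2 log p`,
in total at most `2 θ √n ≪ √n`.
-/

open Finset Real Chebyshev

lemma div_mul_sub_one_eq_sum_Ico_add (y : ℝ) {q : ℝ} (hq : 1 < q) {L : ℕ} (hL : 1 ≤ L) :
    y / (q * (q - 1)) = ∑ i ∈ Ico 2 (L + 1), y / q ^ i + y / (q ^ L * (q - 1)) := by
  induction L, hL using Nat.le_induction with
  | base => simp
  | succ L hL ih =>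
    have hq0 : q - 1 ≠ 0 := by linarith
    rw [sum_Ico_succ_top (by omega), ih]
    field_simp
    ring

-- Summation by parts against the partial sums of `a`, kept as an invariant in `M`.
lemma sum_Ioc_div_sq_le_sum_range_div_sq_add {a : ℕ → ℝ} {K : ℝ} (ha : ∀ m, 0 ≤ a m)
    (hA : ∀ t, ∑ m ∈ range (t + 1), a m ≤ K * t) (hK : 0 ≤ K) {N M : ℕ} (hN : 0 < N)
    (hNM : N ≤ M) :
    ∑ m ∈ Ioc N M, a m / m ^ 2 ≤ (∑ m ∈ range (M + 1), a m) / M ^ 2 + 2 * K * (1 / N - 1 / M) := by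
  induction M, hNM using Nat.le_induction with
  | base => simpa using div_nonneg (sum_nonneg fun m _ ↦ ha m) (sq_nonneg (N : ℝ))
  | succ M hNM ih =>
    have hM : (1 : ℝ) ≤ M := by exact_mod_cast hN.trans_le hNM
    set A := ∑ m ∈ range (M + 1), a m
    have hstep : A / M ^ 2 - A / (M + 1) ^ 2 ≤ 2 * K * (1 / M - 1 / (M + 1)) :=
      calc A / M ^ 2 - A / (M + 1) ^ 2 = A * ((2 * M + 1) / (M ^ 2 * (M + 1) ^ 2)) := by
            field_simp; ring
        _ ≤ K * M * ((2 * M + 1) / (M ^ 2 * (M + 1) ^ 2)) := by gcongr; exact hA M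
        _ = 2 * K * (1 / M - 1 / (M + 1)) - K / (M * (M + 1) ^ 2) := by field_simp; ring
        _ ≤ 2 * K * (1 / M - 1 / (M + 1)) := by
            linarith [div_nonneg hK (by positivity : (0 : ℝ) ≤ M * (M + 1) ^ 2)]
    rw [sum_Ioc_succ_top (by omega), sum_range_succ]
    push_cast
    rw [add_div]
    linarith

lemma sum_Ioc_div_sq_le {a : ℕ → ℝ} {K : ℝ} (ha : ∀ m, 0 ≤ a m)
    (hA : ∀ t, ∑ m ∈ range (t + 1), a m ≤ K * t) {N : ℕ} (hN : 0 < N) (M : ℕ) :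
    ∑ m ∈ Ioc N M, a m / m ^ 2 ≤ 3 * K / N := by
  have hK : 0 ≤ K := by simpa using (sum_nonneg fun m _ ↦ ha m).trans (hA 1)
  rcases le_or_gt M N with hMN | hNM
  · rw [Ioc_eq_empty_of_le hMN, sum_empty]
    positivity
  have hN' : (0 : ℝ) < N := by exact_mod_cast hN
  have hM : (N : ℝ) ≤ M := by exact_mod_cast hNM.le
  have hM0 : (0 : ℝ) < M := hN'.trans_le hM
  have hfirst : (∑ m ∈ range (M + 1), a m) / M ^ 2 ≤ K / N :=
    calc (∑ m ∈ range (M + 1), a m) / M ^ 2 ≤ K * M / M ^ 2 := by gcongr; exact hA M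
      _ = K / M := by field_simp
      _ ≤ K / N := div_le_div_of_nonneg_left hK hN' hM
  have hsecond : 2 * K * (1 / N - 1 / M) ≤ 2 * K / N := by
    rw [mul_sub, mul_one_div]
    linarith [div_nonneg (mul_nonneg zero_le_two hK) hM0.le, mul_one_div (2 * K) (M : ℝ)]
  calc ∑ m ∈ Ioc N M, a m / m ^ 2
      ≤ (∑ m ∈ range (M + 1), a m) / M ^ 2 + 2 * K * (1 / N - 1 / M) :=
        sum_Ioc_div_sq_le_sum_range_div_sq_add ha hA hK hN hNM.le
    _ ≤ K / N + 2 * K / N := add_le_add hfirst hsecond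
    _ = 3 * K / N := by ring

lemma natCast_div_sqrt_le {n : ℕ} (hn : 0 < n) : (n : ℝ) / n.sqrt ≤ 2 * √n := by
  have hR : (1 : ℝ) ≤ n.sqrt := by exact_mod_cast Nat.sqrt_pos.2 hn
  have hs : √(n : ℝ) * √n = n := Real.mul_self_sqrt n.cast_nonneg
  have := Real.real_sqrt_lt_nat_sqrt_succ (a := n)
  rw [div_le_iff₀ (by linarith)]
  nlinarith [Real.sqrt_nonneg n]

lemma sum_primesLE_log_sub_one_mul_log_le {R n : ℕ} (hRn : R ≤ n) :
    ∑ p ∈ R.primesLE, ((Nat.log p n : ℝ) - 1) * log p ≤ ψ n - θ n := by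
  rw [psi_eq_sum_mul_log_prime, theta_eq_sum_primesLE_log, ← sum_sub_distrib]
  simp_rw [← sub_one_mul]
  refine sum_le_sum_of_subset_of_nonneg (Nat.primesLE_mono hRn) fun p hp _ ↦ ?_
  obtain ⟨hpn, hp⟩ := Nat.mem_primesLE.1 hp
  have hL : (1 : ℝ) ≤ Nat.log p n := by exact_mod_cast Nat.log_pos hp.one_lt hpn
  exact mul_nonneg (by linarith) (log_natCast_nonneg p)

noncomputable def cconstTerm (m : ℕ) : ℝ := if m.Prime then log m / (m * (m - 1)) else 0

lemma cconst_eq_tsum : cconst = ∑' m, cconstTerm m := by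
  refine (tsum_subtype {p : ℕ | p.Prime} fun p ↦ log p / (p * (p - 1) : ℝ)).trans ?_
  congr 1 with m
  simp only [Set.indicator_apply, Set.mem_ofPred_eq, cconstTerm]

lemma cconstTerm_nonneg (m : ℕ) : 0 ≤ cconstTerm m := by
  unfold cconstTerm
  split_ifs with hm
  · have : (2 : ℝ) ≤ m := by exact_mod_cast hm.two_le
    have := log_nonneg (by linarith : (1 : ℝ) ≤ m)
    have : (0 : ℝ) ≤ m * (m - 1) := by nlinarith
    positivity
  · exact le_rfl

lemma cconstTerm_le (m : ℕ) : cconstTerm m ≤ 2 * (if m.Prime then log m else 0) / m ^ 2 := by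
  unfold cconstTerm
  split_ifs with hm
  · have hm2 : (2 : ℝ) ≤ m := by exact_mod_cast hm.two_le
    have := log_nonneg (by linarith : (1 : ℝ) ≤ m)
    rw [div_le_div_iff₀ (by nlinarith) (by positivity)]
    nlinarith [mul_nonneg this (by nlinarith : (0 : ℝ) ≤ m * (m - 2))]
  · simp

lemma sum_Ioc_cconstTerm_le {N : ℕ} (hN : 0 < N) (M : ℕ) :
    ∑ m ∈ Ioc N M, cconstTerm m ≤ 6 * log 4 / N := by
  have hθ (t : ℕ) : ∑ m ∈ range (t + 1), (if m.Prime then log m else 0) ≤ log 4 * t := by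
    rw [← sum_filter, ← Nat.primesLE_eq_filter_range, ← theta_eq_sum_primesLE_log]
    exact theta_le_log4_mul_x t.cast_nonneg
  have hlog (m : ℕ) : 0 ≤ if m.Prime then log m else 0 := by
    split_ifs
    · exact log_natCast_nonneg m
    · exact le_rfl
  calc ∑ m ∈ Ioc N M, cconstTerm m
      ≤ 2 * ∑ m ∈ Ioc N M, (if m.Prime then log m else 0) / m ^ 2 := by
        rw [mul_sum]
        exact sum_le_sum fun m _ ↦ (cconstTerm_le m).trans_eq (mul_div_assoc _ _ _)
    _ ≤ 2 * (3 * log 4 / N) := by gcongr; exact sum_Ioc_div_sq_le hlog hθ hN M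
    _ = 6 * log 4 / N := by ring

lemma sum_range_cconstTerm_nat_add_le {N : ℕ} (hN : 0 < N) (M : ℕ) :
    ∑ k ∈ range M, cconstTerm (k + (N + 1)) ≤ 6 * log 4 / N := by
  rw [range_eq_Ico, sum_Ico_add', zero_add, ← add_assoc, Ico_add_one_add_one_eq_Ioc]
  exact sum_Ioc_cconstTerm_le hN _

lemma summable_cconstTerm : Summable cconstTerm :=
  (summable_nat_add_iff 2).1 <|
    summable_of_sum_range_le (fun _ ↦ cconstTerm_nonneg _) (sum_range_cconstTerm_nat_add_le one_pos)

lemma tsum_cconstTerm_nat_add_le {N : ℕ} (hN : 0 < N) :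
    ∑' k, cconstTerm (k + (N + 1)) ≤ 6 * log 4 / N :=
  tsum_le_of_sum_range_le (fun _ ↦ cconstTerm_nonneg _) (sum_range_cconstTerm_nat_add_le hN)

lemma cconst_eq_sum_primesLE_add_tsum (R : ℕ) :
    cconst = ∑ p ∈ R.primesLE, log p / (p * (p - 1)) + ∑' k, cconstTerm (k + (R + 1)) := by
  rw [cconst_eq_tsum, ← summable_cconstTerm.sum_add_tsum_nat_add (R + 1),
    Nat.primesLE_eq_filter_range, sum_filter]
  rfl

/-- Equal to `∑_{i ≥ 2} (n/pⁱ - ⌊n/pⁱ⌋)`, because `n / (p (p - 1)) = ∑_{i ≥ 2} n/pⁱ`. -/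
noncomputable def floorDefect (n p : ℕ) : ℝ :=
  (n : ℝ) / (p * (p - 1)) - ∑ i ∈ Ico 2 (Nat.log p n + 1), ((n / p ^ i : ℕ) : ℝ)

lemma floorDefect_mem_Icc {p n : ℕ} (hp : 2 ≤ p) (hpn : p ≤ n) :
    floorDefect n p ∈ Set.Icc 0 ((Nat.log p n : ℝ) + 1) := by
  set L := Nat.log p n
  have hL : 1 ≤ L := Nat.log_pos hp hpn
  have hp2 : (2 : ℝ) ≤ p := by exact_mod_cast hp
  have hfrac (i : ℕ) :
      0 ≤ (n : ℝ) / p ^ i - (n / p ^ i : ℕ) ∧ (n : ℝ) / p ^ i - (n / p ^ i : ℕ) ≤ 1 := by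
    have := Nat.lt_floor_add_one ((n : ℝ) / (p ^ i : ℕ))
    rw [Nat.floor_div_eq_div] at this
    push_cast at this
    exact ⟨sub_nonneg.2 (by exact_mod_cast Nat.cast_div_le), by linarith⟩
  have htail : 0 ≤ (n : ℝ) / (p ^ L * (p - 1)) ∧ (n : ℝ) / (p ^ L * (p - 1)) ≤ 2 := by
    have hpL := pow_pos (by linarith : (0 : ℝ) < p) L
    have hn : (n : ℝ) < p ^ L * p := by
      rw [← pow_succ]; exact_mod_cast Nat.lt_pow_succ_log_self hp n
    have hden : 0 < (p : ℝ) ^ L * (p - 1) := by nlinarith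
    refine ⟨by positivity, ?_⟩
    rw [div_le_iff₀ hden]
    nlinarith [mul_le_mul_of_nonneg_left (by linarith : (p : ℝ) ≤ 2 * (p - 1)) hpL.le]
  have hcard : ((Ico 2 (L + 1)).card : ℝ) = L - 1 := by
    rw [Nat.card_Ico, Nat.cast_sub (by omega)]; push_cast; ring
  rw [floorDefect, div_mul_sub_one_eq_sum_Ico_add _ (by linarith) hL, add_sub_right_comm,
    ← sum_sub_distrib]
  constructor
  · linarith [sum_nonneg fun i (_ : i ∈ Ico 2 (L + 1)) ↦ (hfrac i).1]
  · have := sum_le_card_nsmul (Ico 2 (L + 1)) _ 1 fun i _ ↦ (hfrac i).2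
    rw [nsmul_one, hcard] at this
    linarith

lemma sum_floorDefect_mul_log_nonneg (n : ℕ) :
    0 ≤ ∑ p ∈ n.sqrt.primesLE, floorDefect n p * log p := by
  refine sum_nonneg fun p hp ↦ ?_
  obtain ⟨hpR, hp⟩ := Nat.mem_primesLE.1 hp
  exact mul_nonneg (floorDefect_mem_Icc hp.two_le (hpR.trans n.sqrt_le_self)).1
    (log_natCast_nonneg p)

lemma sum_floorDefect_mul_log_le {C : ℝ} (hC : ∀ x, ψ x - θ x ≤ C * √x) (n : ℕ) :
    ∑ p ∈ n.sqrt.primesLE, floorDefect n p * log p ≤ (C + 2 * log 4) * √n := by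
  calc ∑ p ∈ n.sqrt.primesLE, floorDefect n p * log p
      ≤ ∑ p ∈ n.sqrt.primesLE, (((Nat.log p n : ℝ) - 1) * log p + 2 * log p) := by
        refine sum_le_sum fun p hp ↦ ?_
        obtain ⟨hpR, hp⟩ := Nat.mem_primesLE.1 hp
        have := (floorDefect_mem_Icc hp.two_le (hpR.trans n.sqrt_le_self)).2
        nlinarith [log_natCast_nonneg p]
    _ = ∑ p ∈ n.sqrt.primesLE, ((Nat.log p n : ℝ) - 1) * log p + 2 * θ n.sqrt := by
        rw [theta_eq_sum_primesLE_log, mul_sum, sum_add_distrib]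
    _ ≤ (ψ n - θ n) + 2 * (log 4 * n.sqrt) := by
        gcongr
        · exact sum_primesLE_log_sub_one_mul_log_le n.sqrt_le_self
        · exact theta_le_log4_mul_x n.sqrt.cast_nonneg
    _ ≤ C * √n + 2 * (log 4 * √n) := by
        gcongr
        · exact hC n
        · exact Real.nat_sqrt_le_real_sqrt
    _ = (C + 2 * log 4) * √n := by ring

lemma finsum_div_pow_mul_log_eq_sum_primesLE (n : ℕ) :
    ∑ᶠ p ∈ {p : ℕ | p.Prime}, ∑ᶠ i ∈ {i : ℕ | 2 ≤ i}, ((n / p ^ i : ℕ) : ℝ) * log p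
      = ∑ p ∈ n.sqrt.primesLE, ∑ i ∈ Ico 2 (Nat.log p n + 1), ((n / p ^ i : ℕ) : ℝ) * log p := by
  have hinner : ∀ p ∈ {p : ℕ | p.Prime}, ∑ᶠ i ∈ {i : ℕ | 2 ≤ i}, ((n / p ^ i : ℕ) : ℝ) * log p
      = ∑ i ∈ Ico 2 (Nat.log p n + 1), ((n / p ^ i : ℕ) : ℝ) * log p := by
    intro p hp
    refine finsum_mem_eq_sum_of_subset _ ?_ fun i hi ↦ (mem_Ico.1 hi).1
    rintro i ⟨hi, hne⟩
    have hpi := (Nat.div_ne_zero_iff.1 (Nat.cast_ne_zero.1 (left_ne_zero_of_mul hne))).2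
    exact mem_Ico.2 ⟨hi, Nat.lt_succ_of_le (Nat.le_log_of_pow_le hp.one_lt hpi)⟩
  rw [finsum_mem_congr rfl hinner]
  refine finsum_mem_eq_sum_of_subset _ ?_ fun p hp ↦ (Nat.mem_primesLE.1 hp).2
  rintro p ⟨hp, hne⟩
  obtain ⟨i, hi, hnei⟩ := exists_ne_zero_of_sum_ne_zero hne
  have hpi := (Nat.div_ne_zero_iff.1 (Nat.cast_ne_zero.1 (left_ne_zero_of_mul hnei))).2
  have hp2 : p ^ 2 ≤ n := (Nat.pow_le_pow_right hp.pos (mem_Ico.1 hi).1).trans hpi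
  exact Nat.mem_primesLE.2 ⟨Nat.le_sqrt'.2 hp2, hp⟩

lemma cconst_mul_sub_finsum_eq (n : ℕ) :
    cconst * n - ∑ᶠ p ∈ {p : ℕ | p.Prime}, ∑ᶠ i ∈ {i : ℕ | 2 ≤ i}, ((n / p ^ i : ℕ) : ℝ) * log p
      = ∑ p ∈ n.sqrt.primesLE, floorDefect n p * log p
        + n * ∑' k, cconstTerm (k + (n.sqrt + 1)) := by
  rw [finsum_div_pow_mul_log_eq_sum_primesLE, cconst_eq_sum_primesLE_add_tsum n.sqrt]
  simp only [floorDefect, sub_mul, sum_sub_distrib, sum_mul, add_mul]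
  rw [sum_congr rfl fun (p : ℕ) _ ↦ div_mul_comm (log (p : ℝ)) ((p : ℝ) * (p - 1)) (n : ℝ)]
  ring

lemma natCast_mul_tsum_cconstTerm_le {n : ℕ} (hn : 0 < n) :
    n * ∑' k, cconstTerm (k + (n.sqrt + 1)) ≤ 12 * log 4 * √n :=
  calc (n : ℝ) * ∑' k, cconstTerm (k + (n.sqrt + 1)) ≤ n * (6 * log 4 / n.sqrt) := by
        gcongr; exact tsum_cconstTerm_nat_add_le (Nat.sqrt_pos.2 hn)
    _ = 6 * log 4 * (n / n.sqrt) := by ring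
    _ ≤ 6 * log 4 * (2 * √n) := by gcongr; exact natCast_div_sqrt_le hn
    _ = 12 * log 4 * √n := by ring

/-- **Proposition (on the contribution of higher prime powers).** With
`c := ∑_{p prime} (log p)/(p(p-1))`, we have
`∑_{p prime} (⌊n/p²⌋ + ⌊n/p³⌋ + ⋯) log p = c n + O(√n)`: there is `M > 0` such that for
every positive integer `n`,
`|∑_{p prime} ∑_{i ≥ 2} ⌊n/pⁱ⌋ log p − c n| ≤ M √n`. (The double sum has only finitely
many nonzero terms; `n / p ^ i` is natural division, i.e. `⌊n/pⁱ⌋`.) -/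
theorem sum_higher_powers_eq :
    ∃ M : ℝ, 0 < M ∧ ∀ n : ℕ, 0 < n →
      |(∑ᶠ p ∈ {p : ℕ | p.Prime}, ∑ᶠ i ∈ {i : ℕ | 2 ≤ i}, ((n / p ^ i : ℕ) : ℝ) * Real.log p)
          - cconst * n| ≤ M * Real.sqrt n := by
  obtain ⟨C, hC⟩ := psi_sub_theta_le_mul_sqrt
  refine ⟨max C 0 + 14 * log 4, by positivity, fun n hn ↦ ?_⟩
  have htail := natCast_mul_tsum_cconstTerm_le hn
  have htail_nonneg : 0 ≤ (n : ℝ) * ∑' k, cconstTerm (k + (n.sqrt + 1)) :=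
    mul_nonneg n.cast_nonneg (tsum_nonneg fun _ ↦ cconstTerm_nonneg _)
  have hprimes := sum_floorDefect_mul_log_le hC n
  have hprimes_nonneg := sum_floorDefect_mul_log_nonneg n
  rw [abs_sub_comm, cconst_mul_sub_finsum_eq, abs_of_nonneg (by positivity)]
  nlinarith [le_max_left C 0, Real.sqrt_nonneg n]
end

section
/- Let 𝒜_n denote the set of prime numbers of the form ⌊n/k + 1⌋ with k a positive integer satisfying k ≤ √n. Then card 𝒜_n = O(√(n/log n)); that is, there is a constant M > 0 such that for all integers n ≥ 2, the number of elements of 𝒜_n is at most M·√(n/log n). -/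
/-!
Put `X = √(n / log n)` and `t = ⌈X⌉`. The values `n / k + 1` with `k ≤ t` contribute at most `t`
primes. For `t < k ≤ √n` the prime `n / k + 1` lies in `(√n, n / (t + 1) + 1]`, and
`n / (t + 1) + 1 ≤ X log n + 1`. Since the product of the primes up to `N` is at most `4 ^ N`,
an interval `[a, N]` contains at most `N log 4 / log a` primes, which for `a > √n` and
`N ≤ X log n + 1` is `O(X)`.
-/

/-- `𝒜 n` is the set of prime numbers of the form `⌊n/k + 1⌋` for some positive
integer `k` with `k ≤ √n` (here `⌊n/k + 1⌋ = n/k + 1` with natural division). -/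
def A (n : ℕ) : Set ℕ :=
  {m : ℕ | m.Prime ∧ ∃ k : ℕ, 0 < k ∧ (k : ℝ) ≤ Real.sqrt n ∧ m = n / k + 1}

open Finset Real

lemma pow_card_primes_Icc_le_four_pow (a N : ℕ) : a ^ #{p ∈ Icc a N | p.Prime} ≤ 4 ^ N :=
  calc a ^ #{p ∈ Icc a N | p.Prime}
      ≤ ∏ p ∈ Icc a N with p.Prime, p :=
        pow_card_le_prod _ _ _ fun p hp => (mem_Icc.mp (mem_filter.mp hp).1).1
    _ ≤ primorial N := by
        refine prod_le_prod_of_subset_of_one_le' (fun p hp => ?_)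
          fun p hp _ => (mem_filter.mp hp).2.one_lt.le
        simp only [mem_filter, mem_Icc, mem_range] at hp ⊢
        exact ⟨by omega, hp.2⟩
    _ ≤ 4 ^ N := primorial_le_four_pow N

lemma card_primes_Icc_mul_log_le (a N : ℕ) :
    (#{p ∈ Icc a N | p.Prime} : ℝ) * log a ≤ 2 * log 2 * N := by
  rcases a.eq_zero_or_pos with rfl | ha
  · simp only [Nat.cast_zero, log_zero, mul_zero]
    positivity
  have h : (a : ℝ) ^ #{p ∈ Icc a N | p.Prime} ≤ (2 ^ 2 : ℝ) ^ N := by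
    exact_mod_cast pow_card_primes_Icc_le_four_pow a N
  have := log_le_log (by positivity) h
  rw [log_pow, log_pow, log_pow] at this
  push_cast at this
  linarith

lemma log_le_two_mul_log_sqrt_succ (n : ℕ) : log n ≤ 2 * log (Nat.sqrt n + 1 : ℕ) := by
  rcases n.eq_zero_or_pos with rfl | hn
  · simp
  have h : log √(n : ℝ) ≤ log (Nat.sqrt n + 1 : ℕ) := by
    push_cast
    exact log_le_log (by positivity) real_sqrt_le_nat_sqrt_succ
  rw [log_sqrt (Nat.cast_nonneg n)] at h
  linarith

lemma card_primes_Icc_sqrt_succ_le {n N : ℕ} {Y : ℝ} (hn : 2 ≤ n) (hY : 0 ≤ Y)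
    (hN : (N : ℝ) ≤ Y * log n + 1) :
    (#{p ∈ Icc (Nat.sqrt n + 1) N | p.Prime} : ℝ) ≤ 4 * Y + 4 := by
  have hlog_pos : 0 < log n := log_pos (by exact_mod_cast hn)
  have hlog : log 2 ≤ log n := log_le_log two_pos (by exact_mod_cast hn)
  have hlog2_le_one : log 2 ≤ 1 := by linarith [log_le_sub_one_of_pos (two_pos (α := ℝ))]
  have hYlog : 0 ≤ Y * log n := by positivity
  refine le_of_mul_le_mul_right ?_ hlog_pos
  calc (#{p ∈ Icc (Nat.sqrt n + 1) N | p.Prime} : ℝ) * log n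
      ≤ #{p ∈ Icc (Nat.sqrt n + 1) N | p.Prime} * (2 * log (Nat.sqrt n + 1 : ℕ)) := by
        gcongr
        exact log_le_two_mul_log_sqrt_succ n
    _ ≤ 4 * log 2 * N := by linarith [card_primes_Icc_mul_log_le (Nat.sqrt n + 1) N]
    _ ≤ 4 * log 2 * (Y * log n + 1) := by gcongr
    _ ≤ 4 * (Y * log n + log n) := by nlinarith
    _ = (4 * Y + 4) * log n := by ring

lemma A_subset (n t : ℕ) :
    A n ⊆ ↑((Icc 1 t).image (fun k => n / k + 1) ∪
      {p ∈ Icc (Nat.sqrt n + 1) (n / (t + 1) + 1) | p.Prime}) := by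
  rintro m ⟨hp, k, hk, hkn, rfl⟩
  have hk_sqrt : k ≤ Nat.sqrt n := by
    simpa only [Real.nat_floor_real_sqrt_eq_nat_sqrt] using Nat.le_floor hkn
  rw [coe_union, Set.mem_union, mem_coe, mem_coe]
  by_cases hkt : k ≤ t
  · exact .inl (mem_image_of_mem _ (mem_Icc.mpr ⟨hk, hkt⟩))
  · have h_sqrt : Nat.sqrt n ≤ n / k := (Nat.le_div_iff_mul_le hk).mpr
      ((Nat.mul_le_mul_left _ hk_sqrt).trans (Nat.sqrt_le n))
    have h_div : n / k ≤ n / (t + 1) := Nat.div_le_div_left (by omega) (by omega)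
    exact .inr (mem_filter.mpr ⟨mem_Icc.mpr ⟨by omega, by omega⟩, hp⟩)

lemma ncard_A_le (n t : ℕ) :
    (A n).ncard ≤ t + #{p ∈ Icc (Nat.sqrt n + 1) (n / (t + 1) + 1) | p.Prime} := by
  refine (Set.ncard_le_ncard (A_subset n t) (finite_toSet _)).trans ?_
  rw [Set.ncard_coe_finset]
  refine (card_union_le _ _).trans (Nat.add_le_add_right ?_ _)
  exact card_image_le.trans (Nat.card_Icc 1 t).le

lemma cast_div_ceil_succ_le (n : ℕ) {x : ℝ} (hx : 0 < x) :
    ((n / (⌈x⌉₊ + 1) : ℕ) : ℝ) ≤ n / x :=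
  Nat.cast_div_le.trans <| div_le_div_of_nonneg_left (Nat.cast_nonneg n) hx <| by
    push_cast
    linarith [Nat.le_ceil x]

/-- **Proposition 8.** `card 𝒜 n = O(√(n / log n))`: there is `M > 0` such that for
every integer `n ≥ 2`, the number of elements of `𝒜 n` is at most `M √(n / log n)`. -/
theorem card_A_le :
    ∃ M : ℝ, 0 < M ∧ ∀ n : ℕ, 2 ≤ n →
      ((A n).ncard : ℝ) ≤ M * Real.sqrt ((n : ℝ) / Real.log n) := by
  refine ⟨10, by norm_num, fun n hn => ?_⟩
  set X := √((n : ℝ) / log n)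
  have hlog_pos : 0 < log n := log_pos (by exact_mod_cast hn)
  have hX : 1 ≤ X := one_le_sqrt.mpr <| (one_le_div hlog_pos).mpr (log_le_self n.cast_nonneg)
  have hnX : (n : ℝ) / X = X * log n := by
    rw [div_eq_iff (by linarith : (0 : ℝ) < X).ne', mul_right_comm, ← sq, sq_sqrt (by positivity),
      div_mul_cancel₀ _ hlog_pos.ne']
  set t := ⌈X⌉₊
  set c := #{p ∈ Icc (Nat.sqrt n + 1) (n / (t + 1) + 1) | p.Prime}
  have hN : ((n / (t + 1) + 1 : ℕ) : ℝ) ≤ X * log n + 1 := by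
    push_cast
    linarith [cast_div_ceil_succ_le n (by linarith : 0 < X)]
  have hc : (c : ℝ) ≤ 4 * X + 4 := card_primes_Icc_sqrt_succ_le hn (by linarith) hN
  calc ((A n).ncard : ℝ) ≤ t + c := by exact_mod_cast ncard_A_le n t
    _ ≤ (X + 1) + (4 * X + 4) := by
        gcongr
        exact (Nat.ceil_lt_add_one (by linarith)).le
    _ ≤ 10 * X := by linarith
end
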